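/- arXiv:1710.00250 — 2 statements merged into one kernel-verified Lean document; each statement's English description precedes it below -/
import Mathlib

section
/- For all x ∈ ℝ, the Hilbert transform of the function t ↦ 2t/(t²+1) satisfies H₀(2t/(t²+1))(x) = -2/(x²+1). Equivalently, the derivative of the modified Hilbert transform of f(x) = log(x²+1) equals -2/(x²+1). -/
/-!
For `t ≠ 0` the integrand has, by partial fractions, the primitive
`G t = x/(x²+1) · log (t²/((t-x)²+1)) - 2/(x²+1) · arctan (t-x)`.
Since `t²/((t-x)²+1) → 1`, `G` tends to `∓π/(x²+1)` at `±∞`, so the truncated integral is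
`G(-ε) - G ε - 2π/(x²+1)`. The logarithmic singularities of `G` at `0` cancel in
`G(-ε) - G ε`, which therefore tends to `0` with `ε`.
-/

open MeasureTheory Filter Real Set Topology

namespace HilbertLogDeriv

variable (x : ℝ)

noncomputable def primitive (t : ℝ) : ℝ :=
  x / (x ^ 2 + 1) * log (t ^ 2 / ((t - x) ^ 2 + 1)) - 2 / (x ^ 2 + 1) * arctan (t - x)

lemma hasDerivAt_primitive {t : ℝ} (ht : t ≠ 0) :
    HasDerivAt (primitive x) (2 * (x - t) / ((x - t) ^ 2 + 1) / t) t := by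
  have hq : (t - x) ^ 2 + 1 ≠ 0 := by positivity
  have hshift : HasDerivAt (fun s => s - x) 1 t := (hasDerivAt_id t).sub_const x
  have hratio : HasDerivAt (fun s => s ^ 2 / ((s - x) ^ 2 + 1))
      ((2 * t * ((t - x) ^ 2 + 1) - t ^ 2 * (2 * (t - x))) / ((t - x) ^ 2 + 1) ^ 2) t := by
    simpa using (hasDerivAt_pow 2 t).fun_div ((hshift.pow 2).add_const 1) hq
  have harctan : HasDerivAt (fun s => arctan (s - x)) (1 / (1 + (t - x) ^ 2)) t := by
    simpa using hshift.arctan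
  refine (((hratio.log (div_ne_zero (pow_ne_zero 2 ht) hq)).const_mul (x / (x ^ 2 + 1))).sub
    (harctan.const_mul (2 / (x ^ 2 + 1)))).congr_deriv ?_
  field_simp
  ring

lemma tendsto_sq_div_sq_sub_add_one_cobounded :
    Tendsto (fun t : ℝ => t ^ 2 / ((t - x) ^ 2 + 1)) (Bornology.cobounded ℝ) (𝓝 1) := by
  have hinv := tendsto_inv₀_cobounded (α := ℝ)
  have h : Tendsto (fun t : ℝ => ((1 - x * t⁻¹) ^ 2 + t⁻¹ ^ 2)⁻¹) (Bornology.cobounded ℝ)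
      (𝓝 ((((1 : ℝ) - x * 0) ^ 2 + 0 ^ 2)⁻¹)) :=
    (((tendsto_const_nhds.sub (hinv.const_mul x)).pow 2).add (hinv.pow 2)).inv₀ (by norm_num)
  rw [show (((1 : ℝ) - x * 0) ^ 2 + 0 ^ 2)⁻¹ = 1 by norm_num] at h
  refine h.congr' ?_
  filter_upwards [Bornology.eventually_ne_cobounded 0] with t ht
  field_simp

lemma tendsto_primitive {l : Filter ℝ} (hl : l ≤ Bornology.cobounded ℝ) {a : ℝ}
    (ha : Tendsto (fun t => arctan (t - x)) l (𝓝 a)) :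
    Tendsto (primitive x) l (𝓝 (-(2 / (x ^ 2 + 1) * a))) := by
  have hlog := (continuousAt_log one_ne_zero).tendsto.comp
    ((tendsto_sq_div_sq_sub_add_one_cobounded x).mono_left hl)
  unfold primitive
  simpa using (hlog.const_mul (x / (x ^ 2 + 1))).sub (ha.const_mul (2 / (x ^ 2 + 1)))

lemma tendsto_primitive_atTop :
    Tendsto (primitive x) atTop (𝓝 (-(2 / (x ^ 2 + 1) * (π / 2)))) :=
  tendsto_primitive x IsOrderBornology.atTop_le_cobounded <|
    (tendsto_nhds_of_tendsto_nhdsWithin tendsto_arctan_atTop).comp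
      (tendsto_atTop_add_const_right _ _ tendsto_id)

lemma tendsto_primitive_atBot :
    Tendsto (primitive x) atBot (𝓝 (-(2 / (x ^ 2 + 1) * -(π / 2)))) :=
  tendsto_primitive x IsOrderBornology.atBot_le_cobounded <|
    (tendsto_nhds_of_tendsto_nhdsWithin tendsto_arctan_atBot).comp
      (tendsto_atBot_add_const_right _ _ tendsto_id)

lemma primitive_neg_sub_primitive {ε : ℝ} (hε : ε ≠ 0) :
    primitive x (-ε) - primitive x ε
      = x / (x ^ 2 + 1) * (log ((ε - x) ^ 2 + 1) - log ((-ε - x) ^ 2 + 1))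
        - 2 / (x ^ 2 + 1) * (arctan (-ε - x) - arctan (ε - x)) := by
  have hε2 : ε ^ 2 ≠ 0 := pow_ne_zero 2 hε
  simp only [primitive, neg_sq]
  rw [log_div hε2 (by positivity), log_div hε2 (by positivity)]
  ring

lemma tendsto_primitive_neg_sub_primitive :
    Tendsto (fun ε => primitive x (-ε) - primitive x ε) (𝓝[≠] 0) (𝓝 0) := by
  have hcont : Continuous fun ε : ℝ => x / (x ^ 2 + 1) * (log ((ε - x) ^ 2 + 1)
      - log ((-ε - x) ^ 2 + 1)) - 2 / (x ^ 2 + 1) * (arctan (-ε - x) - arctan (ε - x)) := by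
    fun_prop (disch := intro; positivity)
  refine (tendsto_nhdsWithin_of_tendsto_nhds (by simpa using hcont.tendsto 0)).congr' ?_
  filter_upwards [self_mem_nhdsWithin] with ε hε
  exact (primitive_neg_sub_primitive x hε).symm

lemma abs_integrand_le (t : ℝ) :
    |2 * (x - t) / ((x - t) ^ 2 + 1) / t| ≤ (2 + |x|) / t ^ 2 := by
  rcases eq_or_ne t 0 with rfl | ht
  · simp
  have hq : 0 < (x - t) ^ 2 + 1 := by positivity
  rw [abs_div, abs_div, abs_of_pos hq, div_div, div_le_div_iff₀ (by positivity) (by positivity),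
    ← sq_abs t]
  have htri : |t| ≤ |x - t| + |x| := by simpa [abs_sub_comm t x] using abs_add_le (t - x) x
  have key : 2 * |x - t| * |t| ≤ (2 + |x|) * (|x - t| ^ 2 + 1) := by
    nlinarith [mul_le_mul_of_nonneg_left htri (abs_nonneg (x - t)),
      mul_nonneg (abs_nonneg x) (sq_nonneg (|x - t| - 1))]
  rw [abs_mul, abs_two, ← sq_abs (x - t)]
  nlinarith [mul_le_mul_of_nonneg_right key (abs_nonneg t)]

lemma integrableOn_integrand {ε : ℝ} (hε : 0 < ε) :
    IntegrableOn (fun t => 2 * (x - t) / ((x - t) ^ 2 + 1) / t) {t | ε ≤ |t|} := by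
  have hmeas : MeasurableSet {t : ℝ | ε ≤ |t|} := measurableSet_le measurable_const measurable_abs
  refine Integrable.mono' ((integrable_inv_one_add_sq.const_mul
    ((2 + |x|) * (1 + ε⁻¹ ^ 2))).integrableOn) (by fun_prop : Measurable _).aestronglyMeasurable ?_
  filter_upwards [ae_restrict_mem hmeas] with t (ht : ε ≤ |t|)
  have ht0 : 0 < t ^ 2 := by rw [← sq_abs]; exact pow_pos (hε.trans_le ht) 2
  have hεt : ε ^ 2 ≤ t ^ 2 := by rw [← sq_abs t]; gcongr
  refine (abs_integrand_le x t).trans ?_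
  rw [div_eq_mul_inv, mul_assoc]
  gcongr
  rw [inv_le_iff_one_le_mul₀ ht0]
  field_simp
  nlinarith

lemma integral_integrand_eq_primitive {ε : ℝ} (hε : 0 < ε) :
    ∫ t in {t | ε ≤ |t|}, 2 * (x - t) / ((x - t) ^ 2 + 1) / t
      = primitive x (-ε) - primitive x ε - 2 / (x ^ 2 + 1) * π := by
  have hsplit : {t : ℝ | ε ≤ |t|} = Iic (-ε) ∪ Ici ε := by
    ext t
    simp only [mem_ofPred_eq, le_abs, mem_union, mem_Iic, mem_Ici, le_neg]
    tauto
  have hint := integrableOn_integrand x hε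
  rw [hsplit] at hint ⊢
  rw [setIntegral_union (Iic_disjoint_Ici.mpr (by linarith)) measurableSet_Ici
      (hint.mono_set subset_union_left) (hint.mono_set subset_union_right),
    integral_Ici_eq_integral_Ioi,
    integral_Iic_of_hasDerivAt_of_tendsto'
      (fun t ht => hasDerivAt_primitive x (by linarith [mem_Iic.mp ht]))
      (hint.mono_set subset_union_left) (tendsto_primitive_atBot x),
    integral_Ioi_of_hasDerivAt_of_tendsto'
      (fun t ht => hasDerivAt_primitive x (by linarith [mem_Ici.mp ht]))
      (hint.mono_set (Ioi_subset_Ici_self.trans subset_union_right)) (tendsto_primitive_atTop x)]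
  ring

end HilbertLogDeriv

/-- The Hilbert transform of `t ↦ 2t/(t²+1)` equals `x ↦ -2/(x²+1)`: for every `x`,
the principal value `(1/π) lim_{ε→0⁺} ∫_{|t|≥ε} f(x-t)/t dt` exists and equals `-2/(x²+1)`.
Equivalently, the derivative of the modified Hilbert transform of `log(x²+1)` is `-2/(x²+1)`. -/
theorem hilbert_of_log_deriv (x : ℝ) :
    Tendsto
      (fun ε : ℝ =>
        (1 / Real.pi) * ∫ t in {t : ℝ | ε ≤ |t|}, (2 * (x - t) / ((x - t) ^ 2 + 1)) / t)
      (nhdsWithin 0 (Set.Ioi 0)) (nhds (-2 / (x ^ 2 + 1))) := by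
  have hlim := (((HilbertLogDeriv.tendsto_primitive_neg_sub_primitive x).mono_left
    (nhdsWithin_mono 0 fun _ h => ne_of_gt h)).sub_const (2 / (x ^ 2 + 1) * π)).const_mul (1 / π)
  rw [show 1 / π * (0 - 2 / (x ^ 2 + 1) * π) = -2 / (x ^ 2 + 1) by field_simp; ring] at hlim
  refine hlim.congr' ?_
  filter_upwards [self_mem_nhdsWithin] with ε hε
  rw [HilbertLogDeriv.integral_integrand_eq_primitive x hε]
end

section
/- Let f(x) = ⟨x⟩^{1/2} = (1+x²)^{1/4}, so that f'(x) = (1/2) x ⟨x⟩^{-3/2}. Then the Hilbert transform of f' satisfies the uniform bound ‖H₀(f')‖_{L^∞(ℝ)} ≤ 20. -/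
/-!
The substitution `t ↦ -t` folds the truncated integral over `{|t| ≥ ε}` into
`∫_{t > ε} (φ(x - t) - φ(x + t)) / t`, where `φ = f'`. This symmetrized integrand is integrable on
`(0, ∞)` uniformly in `x`: it is at most `5/2` since `φ` is `5/4`-Lipschitz; it is at most
`1/t ≤ 2/|x|` on `(|x|/2, 2|x|]`; and elsewhere both `|x ± t| ≥ t/2`, so the decay
`|φ(u)| ≤ |u|^{-1/2}/2` makes it at most `2 t^{-3/2}`. Hence the principal value exists, equals
`(1/π) ∫_0^∞`, and has modulus at most `(5/2 + 3 + 4)/π < 20`.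
-/

open MeasureTheory Filter Set Topology

section

variable {E : Type*} [NormedAddCommGroup E] [NormedSpace ℝ E]

theorem tendsto_setIntegral_Ioi_nhdsGT {f : ℝ → E} {a : ℝ} (hf : IntegrableOn f (Ioi a)) :
    Tendsto (fun ε => ∫ t in Ioi ε, f t) (𝓝[>] a) (𝓝 (∫ t in Ioi a, f t)) := by
  have h_indicator : ∀ ε, a ≤ ε → ∫ t in Ioi ε, f t = ∫ t in Ioi a, (Ioi ε).indicator f t := by
    intro ε hε
    rw [setIntegral_indicator measurableSet_Ioi, Ioi_inter_Ioi, max_eq_right hε]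
  refine Tendsto.congr' ?_ (tendsto_integral_filter_of_dominated_convergence
    (F := fun ε => (Ioi ε).indicator f) (fun t => ‖f t‖)
    (Eventually.of_forall fun _ => hf.aestronglyMeasurable.indicator measurableSet_Ioi)
    (Eventually.of_forall fun _ => Eventually.of_forall fun _ => norm_indicator_le_norm_self _ _)
    hf.norm ?_)
  · filter_upwards [self_mem_nhdsWithin] with ε hε using (h_indicator ε hε.le).symm
  · filter_upwards [ae_restrict_mem measurableSet_Ioi] with t ht
    refine tendsto_const_nhds.congr' ?_
    filter_upwards [Ioo_mem_nhdsGT ht] with ε hε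
    exact (indicator_of_mem (show t ∈ Ioi ε from hε.2) f).symm

theorem setIntegral_le_abs_eq_integral_Ioi_add_comp_neg {f : ℝ → E} {ε : ℝ} (hε : 0 < ε)
    (hf : IntegrableOn f (Ici ε)) (hf_neg : IntegrableOn (fun t => f (-t)) (Ici ε)) :
    ∫ t in {t | ε ≤ |t|}, f t = ∫ t in Ioi ε, (f t + f (-t)) := by
  have h_set : {t : ℝ | ε ≤ |t|} = Iic (-ε) ∪ Ici ε := by
    ext t
    simp only [mem_union, mem_Iic, mem_Ici, le_abs, le_neg, or_comm]
    rfl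
  have hf_Iic : IntegrableOn f (Iic (-ε)) := by
    simpa using hf_neg.comp_neg
  rw [h_set, setIntegral_union (Iic_disjoint_Ici.2 (by linarith)) measurableSet_Ici hf_Iic hf,
    ← integral_comp_neg_Ioi, integral_Ici_eq_integral_Ioi, add_comm,
    integral_add (hf.mono_set Ioi_subset_Ici_self) (hf_neg.mono_set Ioi_subset_Ici_self)]

end

theorem abs_div_le_mul_rpow {b t C : ℝ} (ht : 0 < t) (h : |b| ≤ C * t ^ (-(1 / 2) : ℝ)) :
    |b / t| ≤ C * t ^ (-(3 / 2) : ℝ) := by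
  rw [abs_div, abs_of_pos ht, show (-(3 / 2) : ℝ) = -(1 / 2) - 1 by norm_num,
    Real.rpow_sub_one ht.ne', mul_div_assoc']
  exact div_le_div_of_nonneg_right h ht.le

theorem abs_div_two_le_abs_add {x s : ℝ} (h : |s| ≤ |x| / 2 ∨ 2 * |x| < |s|) :
    |s| / 2 ≤ |x + s| := by
  have h₁ := abs_sub_abs_le_abs_sub x (-s)
  have h₂ := abs_sub_abs_le_abs_sub s (-x)
  rw [abs_neg, sub_neg_eq_add] at h₁ h₂
  rw [add_comm] at h₂
  rcases h with h | h <;> linarith [abs_nonneg s]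

theorem integrable_indicator_Ioc_const (a b c : ℝ) :
    Integrable ((Ioc a b).indicator fun _ => c) :=
  (integrableOn_const measure_Ioc_lt_top.ne).integrable_indicator measurableSet_Ioc

noncomputable def sqrtBracketDeriv (u : ℝ) : ℝ := 1 / 2 * u * (1 + u ^ 2) ^ (-(3 / 4) : ℝ)

namespace sqrtBracketDeriv

local notation "φ" => sqrtBracketDeriv

@[fun_prop]
theorem continuous : Continuous φ := by
  unfold sqrtBracketDeriv
  fun_prop (disch := intro; positivity)

theorem neg (u : ℝ) : φ (-u) = -φ u := by
  simp only [sqrtBracketDeriv, neg_sq]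
  ring

theorem abs_eq (u : ℝ) : |φ u| = 1 / 2 * |u| * (1 + u ^ 2) ^ (-(3 / 4) : ℝ) := by
  rw [sqrtBracketDeriv, abs_mul, abs_mul, abs_of_pos one_half_pos,
    abs_of_pos (Real.rpow_pos_of_pos (by positivity) _)]

theorem abs_le_half (u : ℝ) : |φ u| ≤ 1 / 2 := by
  have h_pos : 0 < 1 + u ^ 2 := by positivity
  have h_abs : |u| ≤ (1 + u ^ 2) ^ (1 / 2 : ℝ) := by
    rw [← Real.sqrt_eq_rpow, ← Real.sqrt_sq_eq_abs]
    exact Real.sqrt_le_sqrt (by linarith)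
  calc |φ u| ≤ 1 / 2 * (1 + u ^ 2) ^ (1 / 2 : ℝ) * (1 + u ^ 2) ^ (-(3 / 4) : ℝ) := by
        rw [abs_eq]; gcongr
    _ = 1 / 2 * (1 + u ^ 2) ^ (-(1 / 4) : ℝ) := by
        rw [mul_assoc, ← Real.rpow_add h_pos]; norm_num
    _ ≤ 1 / 2 := by
        have := Real.rpow_le_one_of_one_le_of_nonpos (by nlinarith : 1 ≤ 1 + u ^ 2)
          (by norm_num : -(1 / 4 : ℝ) ≤ 0)
        linarith

theorem abs_le_rpow (u : ℝ) : |φ u| ≤ 1 / 2 * |u| ^ (-(1 / 2) : ℝ) := by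
  rcases eq_or_ne u 0 with rfl | hu
  · simp [sqrtBracketDeriv]
  have hu' : 0 < |u| := abs_pos.2 hu
  calc |φ u| ≤ 1 / 2 * |u| * (|u| ^ 2) ^ (-(3 / 4) : ℝ) := by
        rw [abs_eq]
        exact mul_le_mul_of_nonneg_left (Real.rpow_le_rpow_of_nonpos (by positivity)
          (by rw [sq_abs]; linarith) (by norm_num)) (by positivity)
    _ = 1 / 2 * |u| ^ (-(1 / 2) : ℝ) := by
        rw [← Real.rpow_natCast, ← Real.rpow_mul hu'.le, mul_assoc,
          ← Real.rpow_one_add' hu'.le (by norm_num)]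
        norm_num

theorem abs_le_rpow_of_half_le {u t : ℝ} (ht : 0 < t) (h : t / 2 ≤ |u|) :
    |φ u| ≤ t ^ (-(1 / 2) : ℝ) := by
  have h_two : 1 / 2 ≤ (2 : ℝ) ^ (-(1 / 2) : ℝ) := by
    calc (1 / 2 : ℝ) = 2 ^ (-1 : ℝ) := by norm_num
      _ ≤ 2 ^ (-(1 / 2) : ℝ) := Real.rpow_le_rpow_of_exponent_le one_le_two (by norm_num)
  calc |φ u| ≤ 1 / 2 * (t / 2) ^ (-(1 / 2) : ℝ) := by
        refine (abs_le_rpow u).trans (mul_le_mul_of_nonneg_left ?_ (by norm_num))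
        exact Real.rpow_le_rpow_of_nonpos (by positivity) h (by norm_num)
    _ ≤ 2 ^ (-(1 / 2) : ℝ) * (t / 2) ^ (-(1 / 2) : ℝ) := by gcongr
    _ = t ^ (-(1 / 2) : ℝ) := by
        rw [← Real.mul_rpow (by norm_num) (by positivity)]; ring_nf

theorem hasDerivAt (u : ℝ) :
    HasDerivAt φ (1 / 2 * (1 + u ^ 2) ^ (-(3 / 4) : ℝ)
      - 3 / 4 * u ^ 2 * (1 + u ^ 2) ^ (-(3 / 4) - 1 : ℝ)) u :=
  (((hasDerivAt_id u).const_mul (1 / 2 : ℝ)).mul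
    (((hasDerivAt_pow 2 u).const_add 1).rpow_const (p := -(3 / 4))
      (Or.inl (by positivity)))).congr_deriv (by norm_num; ring)

theorem abs_deriv_le (u : ℝ) :
    |1 / 2 * (1 + u ^ 2) ^ (-(3 / 4) : ℝ) - 3 / 4 * u ^ 2 * (1 + u ^ 2) ^ (-(3 / 4) - 1 : ℝ)|
      ≤ 5 / 4 := by
  have h_pos : 0 < 1 + u ^ 2 := by positivity
  have hA : (1 + u ^ 2) ^ (-(3 / 4) : ℝ) ≤ 1 :=
    Real.rpow_le_one_of_one_le_of_nonpos (by nlinarith) (by norm_num)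
  have hB : u ^ 2 * (1 + u ^ 2) ^ (-(3 / 4) - 1 : ℝ) ≤ (1 + u ^ 2) ^ (-(3 / 4) : ℝ) := by
    calc u ^ 2 * (1 + u ^ 2) ^ (-(3 / 4) - 1 : ℝ)
        ≤ (1 + u ^ 2) * (1 + u ^ 2) ^ (-(3 / 4) - 1 : ℝ) := by gcongr; linarith
      _ = (1 + u ^ 2) ^ (-(3 / 4) : ℝ) := by
        rw [Real.rpow_sub_one h_pos.ne']; field_simp
  have : 0 ≤ u ^ 2 * (1 + u ^ 2) ^ (-(3 / 4) - 1 : ℝ) := by positivity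
  have : 0 ≤ (1 + u ^ 2) ^ (-(3 / 4) : ℝ) := by positivity
  rw [abs_le]; constructor <;> nlinarith

theorem abs_sub_le (a b : ℝ) : |φ a - φ b| ≤ 5 / 4 * |a - b| := by
  simpa only [Real.norm_eq_abs] using Convex.norm_image_sub_le_of_norm_hasDerivWithin_le
    (fun u _ => (hasDerivAt u).hasDerivWithinAt) (fun u _ => abs_deriv_le u)
    convex_univ (mem_univ b) (mem_univ a)

theorem integrableOn_Ici_add_div (c : ℝ) {ε : ℝ} (hε : 0 < ε) :
    IntegrableOn (fun t => φ (c + t) / t) (Ici ε) := by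
  have h_cont : ContinuousOn (fun t => φ (c + t) / t) (Ici ε) :=
    (continuous.comp (continuous_const_add c)).continuousOn.div continuousOn_id
      fun t ht => (hε.trans_le ht).ne'
  refine (h_cont.locallyIntegrableOn measurableSet_Ici).integrableOn_of_isBigO_atTop
    (g := fun t => t ^ (-(3 / 2) : ℝ)) ?_ (integrableAtFilter_rpow_atTop_iff.2 (by norm_num))
  refine Asymptotics.IsBigO.of_bound 1 ?_
  filter_upwards [eventually_gt_atTop (2 * |c|), eventually_gt_atTop 0] with t hct ht
  have h_far : t / 2 ≤ |c + t| := by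
    simpa [abs_of_pos ht] using
      abs_div_two_le_abs_add (x := c) (s := t) (Or.inr (by rwa [abs_of_pos ht]))
  rw [Real.norm_eq_abs, Real.norm_eq_abs, abs_of_pos (Real.rpow_pos_of_pos ht _)]
  exact abs_div_le_mul_rpow ht (by simpa using abs_le_rpow_of_half_le ht h_far)

end sqrtBracketDeriv

open sqrtBracketDeriv

local notation "φ" => sqrtBracketDeriv

noncomputable def symmetrizedIntegrand (x t : ℝ) : ℝ := (φ (x - t) - φ (x + t)) / t

noncomputable def symmetrizedBound (a : ℝ) : ℝ → ℝ :=
  (Ioc 0 1).indicator (fun _ => 5 / 2) + (Ioc (a / 2) (2 * a)).indicator (fun _ => 2 / a)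
    + (Ioi 1).indicator (fun t => 2 * t ^ (-(3 / 2) : ℝ))

namespace symmetrizedBound

theorem summands_nonneg {a : ℝ} (ha : 0 ≤ a) (t : ℝ) :
    0 ≤ (Ioc 0 1).indicator (fun _ => (5 / 2 : ℝ)) t ∧
      0 ≤ (Ioc (a / 2) (2 * a)).indicator (fun _ => 2 / a) t ∧
      0 ≤ (Ioi 1).indicator (fun t => 2 * t ^ (-(3 / 2) : ℝ)) t :=
  ⟨indicator_nonneg (fun _ _ => by norm_num) t, indicator_nonneg (fun _ _ => by positivity) t,
    indicator_nonneg (fun s hs => by have : (0 : ℝ) < s := one_pos.trans hs; positivity) t⟩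

theorem nonneg {a : ℝ} (ha : 0 ≤ a) (t : ℝ) : 0 ≤ symmetrizedBound a t :=
  let ⟨h₁, h₂, h₃⟩ := summands_nonneg ha t
  add_nonneg (add_nonneg h₁ h₂) h₃

theorem integrable_indicator_Ioi_rpow :
    Integrable ((Ioi (1 : ℝ)).indicator fun t => 2 * t ^ (-(3 / 2) : ℝ)) :=
  IntegrableOn.integrable_indicator
    ((integrableOn_Ioi_rpow_of_lt (by norm_num) one_pos).const_mul 2) measurableSet_Ioi

theorem integrable (a : ℝ) : Integrable (symmetrizedBound a) :=
  ((integrable_indicator_Ioc_const _ _ _).add (integrable_indicator_Ioc_const _ _ _)).add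
    integrable_indicator_Ioi_rpow

theorem integral_le {a : ℝ} (ha : 0 ≤ a) :
    ∫ t, symmetrizedBound a t ≤ 19 / 2 := by
  have h_near : ∫ t, (Ioc (0 : ℝ) 1).indicator (fun _ => (5 / 2 : ℝ)) t = 5 / 2 := by
    rw [integral_indicator_const _ measurableSet_Ioc, Real.volume_real_Ioc_of_le zero_le_one]
    norm_num
  have h_mid : ∫ t, (Ioc (a / 2) (2 * a)).indicator (fun _ => 2 / a) t ≤ 3 := by
    rw [integral_indicator_const _ measurableSet_Ioc, Real.volume_real_Ioc_of_le (by linarith),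
      smul_eq_mul]
    rcases ha.eq_or_lt with rfl | ha
    · norm_num
    · field_simp; linarith
  have h_far : ∫ t, (Ioi (1 : ℝ)).indicator (fun t => 2 * t ^ (-(3 / 2) : ℝ)) t = 4 := by
    rw [integral_indicator measurableSet_Ioi, integral_const_mul,
      integral_Ioi_rpow_of_lt (by norm_num) one_pos]
    norm_num
  have h_Ioc := integrable_indicator_Ioc_const
  rw [symmetrizedBound,
    integral_add' ((h_Ioc _ _ _).add (h_Ioc _ _ _)) integrable_indicator_Ioi_rpow,
    integral_add' (h_Ioc _ _ _) (h_Ioc _ _ _)]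
  linarith

end symmetrizedBound

namespace symmetrizedIntegrand

theorem measurable (x : ℝ) : Measurable (symmetrizedIntegrand x) := by
  unfold symmetrizedIntegrand
  fun_prop

theorem abs_le_const (x t : ℝ) : |symmetrizedIntegrand x t| ≤ 5 / 2 := by
  have h := sqrtBracketDeriv.abs_sub_le (x - t) (x + t)
  rw [show x - t - (x + t) = -(2 * t) by ring, abs_neg, abs_mul, abs_two] at h
  rw [symmetrizedIntegrand, abs_div]
  exact div_le_of_le_mul₀ (abs_nonneg t) (by norm_num) (by linarith)

theorem abs_le_inv (x : ℝ) {t : ℝ} (ht : 0 < t) : |symmetrizedIntegrand x t| ≤ t⁻¹ := by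
  rw [symmetrizedIntegrand, abs_div, abs_of_pos ht, div_eq_mul_inv]
  refine mul_le_of_le_one_left (inv_nonneg.2 ht.le) ?_
  linarith [abs_sub (φ (x - t)) (φ (x + t)), abs_le_half (x - t), abs_le_half (x + t)]

theorem abs_le_rpow (x : ℝ) {t : ℝ} (ht : 0 < t) (hxt : t ≤ |x| / 2 ∨ 2 * |x| < t) :
    |symmetrizedIntegrand x t| ≤ 2 * t ^ (-(3 / 2) : ℝ) := by
  have h_far (s : ℝ) (hs : |s| = t) : |φ (x + s)| ≤ t ^ (-(1 / 2) : ℝ) :=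
    abs_le_rpow_of_half_le ht (hs ▸ abs_div_two_le_abs_add (hs ▸ hxt))
  refine abs_div_le_mul_rpow ht ((abs_sub _ _).trans ?_)
  have h₁ := h_far (-t) (by rw [abs_neg, abs_of_pos ht])
  have h₂ := h_far t (abs_of_pos ht)
  rw [← sub_eq_add_neg] at h₁
  linarith

theorem abs_le_symmetrizedBound (x : ℝ) {t : ℝ} (ht : 0 < t) :
    |symmetrizedIntegrand x t| ≤ symmetrizedBound |x| t := by
  obtain ⟨h₁, h₂, h₃⟩ := symmetrizedBound.summands_nonneg (abs_nonneg x) t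
  simp only [symmetrizedBound, Pi.add_apply]
  by_cases h_near : t ≤ 1
  · rw [indicator_of_mem (show t ∈ Ioc 0 1 from ⟨ht, h_near⟩)]
    linarith [abs_le_const x t]
  rw [not_le] at h_near
  by_cases h_mid : t ∈ Ioc (|x| / 2) (2 * |x|)
  · rw [indicator_of_mem h_mid]
    have h_pos : 0 < |x| / 2 := by linarith [h_mid.1, h_mid.2]
    calc |symmetrizedIntegrand x t| ≤ (|x| / 2)⁻¹ :=
          (abs_le_inv x ht).trans (inv_anti₀ h_pos h_mid.1.le)
      _ = 2 / |x| := inv_div _ _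
      _ ≤ _ := by linarith
  · rw [mem_Ioc, not_and_or, not_lt, not_le] at h_mid
    rw [indicator_of_mem (show t ∈ Ioi 1 from h_near)]
    linarith [abs_le_rpow x ht (h_mid.imp id id)]

theorem integrableOn_Ioi (x : ℝ) :
    IntegrableOn (symmetrizedIntegrand x) (Ioi 0) :=
  (symmetrizedBound.integrable |x|).integrableOn.mono' (measurable x).aestronglyMeasurable
    ((ae_restrict_iff' measurableSet_Ioi).2 (Eventually.of_forall
      fun _ ht => abs_le_symmetrizedBound x ht))

theorem norm_integral_Ioi_le (x : ℝ) :
    ‖∫ t in Ioi 0, symmetrizedIntegrand x t‖ ≤ 19 / 2 := by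
  have h_bound := symmetrizedBound.integrable |x|
  calc ‖∫ t in Ioi 0, symmetrizedIntegrand x t‖ ≤ ∫ t in Ioi 0, symmetrizedBound |x| t :=
        norm_integral_le_of_norm_le h_bound.integrableOn
          ((ae_restrict_iff' measurableSet_Ioi).2 (Eventually.of_forall
            fun _ ht => abs_le_symmetrizedBound x ht))
    _ ≤ ∫ t, symmetrizedBound |x| t :=
        setIntegral_le_integral h_bound (Eventually.of_forall fun t => ?_)
    _ ≤ 19 / 2 := symmetrizedBound.integral_le (abs_nonneg x)
  exact symmetrizedBound.nonneg (abs_nonneg x) t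

end symmetrizedIntegrand

theorem setIntegral_le_abs_sqrtBracketDeriv_sub_div (x : ℝ) {ε : ℝ} (hε : 0 < ε) :
    ∫ t in {t | ε ≤ |t|}, φ (x - t) / t = ∫ t in Ioi ε, symmetrizedIntegrand x t := by
  have h_pos : (fun t => φ (x - t) / t) = fun t => -(φ (-x + t) / t) := by
    ext t; rw [← neg_div, ← sqrtBracketDeriv.neg, neg_add, neg_neg, sub_eq_add_neg]
  have h_neg : (fun t => φ (x - -t) / -t) = fun t => -(φ (x + t) / t) := by
    ext t; rw [sub_neg_eq_add, div_neg]
  rw [setIntegral_le_abs_eq_integral_Ioi_add_comp_neg hε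
    (h_pos ▸ (integrableOn_Ici_add_div (-x) hε).neg) (h_neg ▸ (integrableOn_Ici_add_div x hε).neg)]
  refine setIntegral_congr_fun measurableSet_Ioi fun t _ => ?_
  rw [symmetrizedIntegrand, div_neg, sub_div, sub_neg_eq_add, ← sub_eq_add_neg]

/-- Let `f(x) = ⟨x⟩^{1/2} = (1+x²)^{1/4}`, so `f'(x) = (1/2) x ⟨x⟩^{-3/2}`.
Then the Hilbert transform `H₀(f')(x)`, given by the principal value
`(1/π) lim_{ε→0⁺} ∫_{|t|≥ε} f'(x-t)/t dt`, exists at every `x` and `‖H₀(f')‖_{L^∞} ≤ 20`. -/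
theorem hilbert_of_japanese_bracket_half_deriv_bound (x : ℝ) :
    ∃ L : ℝ,
      Tendsto
        (fun ε : ℝ =>
          (1 / Real.pi) * ∫ t in {t : ℝ | ε ≤ |t|},
            ((1 / 2) * (x - t) * (1 + (x - t) ^ 2) ^ (-(3 / 4) : ℝ)) / t)
        (nhdsWithin 0 (Set.Ioi 0)) (nhds L) ∧ |L| ≤ 20 := by
  refine ⟨1 / Real.pi * ∫ t in Ioi 0, symmetrizedIntegrand x t, ?_, ?_⟩
  · refine ((tendsto_setIntegral_Ioi_nhdsGT (symmetrizedIntegrand.integrableOn_Ioi x)).const_mul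
      _).congr' ?_
    filter_upwards [self_mem_nhdsWithin] with ε hε
    exact congrArg _ (setIntegral_le_abs_sqrtBracketDeriv_sub_div x hε).symm
  · have h_int := symmetrizedIntegrand.norm_integral_Ioi_le x
    rw [Real.norm_eq_abs] at h_int
    rw [abs_mul, abs_of_pos (by positivity), one_div_mul_eq_div, div_le_iff₀ Real.pi_pos]
    linarith [Real.pi_gt_three]
end
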